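/- Let T be a trace in which every read event enjoys an initial write. Then the schedulable happens-before relation <SHB derived from T is a some-schedulable happens-before relation of T: it is a partial order satisfying PO and RAD, and for every read event r of T there exists some WRD candidate w ∈ W(r) with w <SHB r. -/

import Mathlib

/-- Operations an event can perform: read/write on a shared variable,
    acquire/release on a mutex. Variables and mutexes are named by naturals. -/
inductive Op : Type where
  | read : ℕ → Op
  | write : ℕ → Op
  | acq : ℕ → Op
  | rel : ℕ → Op
deriving DecidableEq

/-- An event carries a thread identifier, a trace position and an operation. -/
structure Event : Type where
  tid : ℕ
  pos : ℕ
  op : Op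
deriving DecidableEq

/-- A trace is well formed if the recorded position of each event equals its index. -/
def WellFormed (T : List Event) : Prop :=
  ∀ i : Fin T.length, (T.get i).pos = (i : ℕ)

/-- Program-order edge: same thread, earlier position. -/
def POEdge (T : List Event) (e f : Event) : Prop :=
  e ∈ T ∧ f ∈ T ∧ e.tid = f.tid ∧ e.pos < f.pos

/-- Release-acquire edge: a release of mutex `y` before an acquire of `y` in another
    thread, with no intervening acquire of `y` by a thread other than the releasing one. -/
def RADEdge (T : List Event) (e f : Event) : Prop :=
  e ∈ T ∧ f ∈ T ∧ ∃ y, e.op = Op.rel y ∧ f.op = Op.acq y ∧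
    e.tid ≠ f.tid ∧ e.pos < f.pos ∧
    ∀ g ∈ T, e.pos < g.pos → g.pos < f.pos → g.tid ≠ e.tid → g.op ≠ Op.acq y

/-- The happens-before relation: smallest (strict) partial order containing PO and RAD,
    i.e. the transitive closure of the PO and RAD edges. -/
def HB (T : List Event) : Event → Event → Prop :=
  Relation.TransGen (fun e f => POEdge T e f ∨ RADEdge T e f)

/-- Two events are unsynchronized if neither happens before the other. -/
def Unsync (T : List Event) (e f : Event) : Prop := ¬ HB T e f ∧ ¬ HB T f e

/-- Unsynchronized WRD candidates for the read `r` on variable `x`. -/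
def W1 (T : List Event) (x : ℕ) (r : Event) : Set Event :=
  {w | w ∈ T ∧ w.op = Op.write x ∧ Unsync T r w ∧
    ∀ w' ∈ T, w' ≠ w → w'.op = Op.write x → Unsync T r w' → ¬ HB T w w'}

/-- Synchronized WRD candidates for the read `r` on variable `x`. -/
def W2 (T : List Event) (x : ℕ) (r : Event) : Set Event :=
  {w | w ∈ T ∧ w.op = Op.write x ∧ HB T w r ∧
    ∀ w' ∈ T, w' ≠ w → w'.op = Op.write x → HB T w' r → ¬ HB T w w'}

/-- All WRD candidates. -/
def Wcand (T : List Event) (x : ℕ) (r : Event) : Set Event :=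
  W1 T x r ∪ W2 T x r

/-- Write-read dependency edge: the nearest preceding write on the same variable. -/
def WRDEdge (T : List Event) (w r : Event) : Prop :=
  w ∈ T ∧ r ∈ T ∧ ∃ x, w.op = Op.write x ∧ r.op = Op.read x ∧ w.pos < r.pos ∧
    ∀ g ∈ T, w.pos < g.pos → g.pos < r.pos → g.op ≠ Op.write x

/-- The schedulable happens-before relation: smallest partial order containing
    PO, RAD and WRD edges. -/
def SHB (T : List Event) : Event → Event → Prop :=
  Relation.TransGen (fun e f => POEdge T e f ∨ RADEdge T e f ∨ WRDEdge T e f)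

/-- Every read event enjoys an initial write. -/
def InitialWrites (T : List Event) : Prop :=
  ∀ r ∈ T, ∀ x, r.op = Op.read x → (W2 T x r).Nonempty

/-- A some-schedulable happens-before relation: any (strict) partial order satisfying
    PO and RAD such that every read is preceded by some of its WRD candidates. -/
structure SomeSHB (T : List Event) (R : Event → Event → Prop) : Prop where
  trans : ∀ {a b c : Event}, R a b → R b c → R a c
  irrefl : ∀ a : Event, ¬ R a a
  po : ∀ {e f : Event}, POEdge T e f → R e f
  rad : ∀ {e f : Event}, RADEdge T e f → R e f
  wrd : ∀ r ∈ T, ∀ x, r.op = Op.read x → ∃ w ∈ Wcand T x r, R w r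

/-- A WRD-candidate edge of the graph derived from `T` (labelled `W(r)`). -/
def CandEdge (T : List Event) (w r : Event) : Prop :=
  r ∈ T ∧ ∃ x, r.op = Op.read x ∧ w ∈ Wcand T x r

/-- An edge of the graph derived from `T`: an HB edge or a WRD-candidate edge. -/
def GEdge (T : List Event) (e f : Event) : Prop :=
  HB T e f ∨ CandEdge T e f

/-- A path in the graph derived from `T`: a nonempty sequence of edges
    visiting pairwise distinct nodes. -/
def GPath (T : List Event) (e f : Event) : Prop :=
  ∃ (n : ℕ) (p : Fin (n + 1) → Event), 0 < n ∧ Function.Injective p ∧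
    p 0 = e ∧ p (Fin.last n) = f ∧
    ∀ i : Fin n, GEdge T (p i.castSucc) (p i.succ)


/-! Every PO, RAD and WRD edge moves strictly forward in the trace, so `SHB` is a strict
partial order; it contains `HB`, and an initial write `w ∈ W2(r)` satisfies `w <HB r`,
hence `w <SHB r`. -/

theorem SHB.pos_lt {T : List Event} {e f : Event} (h : SHB T e f) : e.pos < f.pos := by
  have edge_lt : ∀ {a b : Event},
      POEdge T a b ∨ RADEdge T a b ∨ WRDEdge T a b → a.pos < b.pos := by
    rintro a b (⟨-, -, -, hab⟩ | ⟨-, -, -, -, -, -, hab, -⟩ | ⟨-, -, -, -, -, hab, -⟩) <;>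
      exact hab
  induction h with
  | single hab => exact edge_lt hab
  | tail _ hbc ih => exact ih.trans (edge_lt hbc)

theorem SHB.irrefl (T : List Event) (e : Event) : ¬ SHB T e e :=
  fun h => lt_irrefl _ h.pos_lt

theorem HB.shb {T : List Event} {e f : Event} (h : HB T e f) : SHB T e f :=
  Relation.TransGen.mono (fun _ _ hab => hab.imp_right Or.inl) _ _ h

theorem stmt2_general (T : List Event) (hinit : InitialWrites T) :
    SomeSHB T (SHB T) := by
  refine ⟨Relation.TransGen.trans, SHB.irrefl T, fun h => .single (Or.inl h),
    fun h => .single (Or.inr (Or.inl h)), fun r hr x hx => ?_⟩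
  obtain ⟨w, hw⟩ := hinit r hr x hx
  exact ⟨w, Or.inr hw, hw.2.2.1.shb⟩

/-- if every read event enjoys an initial write, then the schedulable
    happens-before relation is a some-schedulable happens-before relation of `T`. -/
theorem stmt2 (T : List Event) (hwf : WellFormed T) (hinit : InitialWrites T) :
    SomeSHB T (SHB T) :=
  stmt2_general T hinit
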